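/- Let A = ⊕_{i≥0} A_i be a finite-dimensional positively graded algebra over a field with A_0 semisimple and A generated by A_1 over A_0. If a finite-dimensional graded A-module M has simple head (M/rad M simple) and simple socle, then M is rigid: soc^i M = rad^{ℓℓ(M)-i} M for all 0 ≤ i ≤ ℓℓ(M). -/

import Mathlib

section LoewySeries

variable (R : Type*) [Ring R] (M : Type*) [AddCommGroup M] [Module R M]

/-- The socle of a module: the sum of all its simple submodules. -/
noncomputable def socM : Submodule R M :=
  sSup {m : Submodule R M | IsSimpleModule R ↥m}

/-- The radical of a module: the intersection of all its maximal (proper) submodules. -/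
noncomputable def radM : Submodule R M :=
  sInf {m : Submodule R M | IsCoatom m}

variable {R M}

/-- Given `N ≤ M`, the preimage in `M` of the socle of `M/N`. -/
noncomputable def socStep (N : Submodule R M) : Submodule R M :=
  Submodule.comap N.mkQ (socM R (M ⧸ N))

/-- Given `N ≤ M`, the radical of `N` viewed as a submodule of `M`. -/
noncomputable def radOf (N : Submodule R M) : Submodule R M :=
  (radM R ↥N).map N.subtype

variable (R M)

/-- The socle series: `soc⁰ M = 0`, `soc^{i+1} M` is the preimage in `M` of
`soc (M / soc^i M)`. -/
noncomputable def socSeries : ℕ → Submodule R M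
  | 0 => ⊥
  | n + 1 => socStep (socSeries n)

/-- The radical series: `rad⁰ M = M`, `rad^{i+1} M = rad (rad^i M)`. -/
noncomputable def radSeries : ℕ → Submodule R M
  | 0 => ⊤
  | n + 1 => radOf (radSeries n)

/-- The Loewy length: the least `n` with `soc^n M = M`. -/
noncomputable def loewyLength : ℕ := sInf {n | socSeries R M n = ⊤}

end LoewySeries

section Graded

variable {k A : Type*} [Field k] [Ring A] [Algebra k A]

/-- `A_{>0}·L = 0` holds degreewise: every homogeneous element of positive degree
annihilates `L`. -/
def PosPartKills (𝒜 : ℤ → Submodule k A) (L : Type*) [AddCommGroup L] [Module A L] : Prop :=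
  ∀ i : ℤ, 0 < i → ∀ a ∈ 𝒜 i, ∀ x : L, a • x = 0

end Graded


/-!
Let `J = A_{≥1}` be the ideal generated by the homogeneous elements of positive degree. It is
nilpotent, so it kills every simple module, and a module killed by `J` is a module over the
semisimple ring `A/J ≅ A_0`, hence semisimple. Therefore `rad N = J N` and `soc N = {x | J x = 0}`
for every module `N`. On the graded module `M` we have `J M_{≥d} ⊆ M_{≥d+1}`. Let `j` and `r` be
the lowest and the highest degree of `M`. A simple head forces `M = A M_j`, and generation in
degree one then gives `J M_{≥d} = M_{≥d+1}` for `d ≥ j`, so `rad^i M = M_{≥j+i}`. A simple socle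
forces `soc M ⊆ M_{≥r}`; since `A_{n+1} = A_n A_1`, an element killed by `A_1` lies in the socle,
and this gives `soc^i M = M_{≥r+1-i}`. Both series are the degree filtration read from its two
ends, and `ℓℓ(M) = r + 1 - j`.
-/

open DirectSum

theorem loewyLength_eq_of_socSeries_eq_top_iff {R M : Type*} [Ring R] [AddCommGroup M]
    [Module R M] {L : ℕ} (h : ∀ n, socSeries R M n = ⊤ ↔ L ≤ n) : loewyLength R M = L := by
  rw [loewyLength, show {n | socSeries R M n = ⊤} = Set.Ici L from Set.ext h, csInf_Ici]

theorem le_socM_of_isSemisimpleModule {R M : Type*} [Ring R] [AddCommGroup M] [Module R M]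
    (W : Submodule R M) [IsSemisimpleModule R W] : W ≤ socM R M := by
  rw [← Submodule.map_subtype_top W, ← IsSemisimpleModule.sSup_simples_eq_top R W,
    (Submodule.gc_map_comap W.subtype).l_sSup]
  refine iSup₂_le fun P (_ : IsSimpleModule R P) => le_sSup ?_
  exact IsSimpleModule.congr (Submodule.equivMapOfInjective _ W.injective_subtype P).symm

section DegreeFiltration

variable {k A M : Type*} [CommRing k] [Ring A] [AddCommGroup M] [Module k M] [Module A M]
  (ℳ : ℤ → Submodule k M)

variable (A) in
/-- `M_{≥d}`; when `A` is positively graded, these are the elements with no component of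
degree `< d`. -/
def degreeGE (d : ℤ) : Submodule A M :=
  Submodule.span A (⋃ i ≥ d, (ℳ i : Set M))

theorem mem_degreeGE_of_mem {d i : ℤ} (hdi : d ≤ i) {x : M} (hx : x ∈ ℳ i) :
    x ∈ degreeGE A ℳ d :=
  Submodule.subset_span (Set.mem_iUnion₂.mpr ⟨i, hdi, hx⟩)

theorem degreeGE_eq_bot {d : ℤ} (h : ∀ i ≥ d, ℳ i = ⊥) : degreeGE A ℳ d = ⊥ := by
  refine Submodule.span_eq_bot.mpr fun x hx => ?_
  obtain ⟨i, hi, hx⟩ := Set.mem_iUnion₂.mp hx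
  simpa [h i hi] using hx

variable [Decomposition ℳ]

theorem mem_degreeGE_of_decompose_eq_zero {d : ℤ} {x : M}
    (h : ∀ n < d, (decompose ℳ x n : M) = 0) : x ∈ degreeGE A ℳ d := by
  classical
  rw [← sum_support_decompose ℳ x]
  refine Submodule.sum_mem _ fun n hn => mem_degreeGE_of_mem ℳ ?_ (SetLike.coe_mem _)
  exact not_lt.mp fun hlt => DFinsupp.mem_support_iff.mp hn (Subtype.ext (h n hlt))

theorem degreeGE_eq_top {d : ℤ} (h : ∀ i < d, ℳ i = ⊥) : degreeGE A ℳ d = ⊤ :=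
  eq_top_iff.mpr fun x _ => mem_degreeGE_of_decompose_eq_zero ℳ fun n hn => by
    simpa [h n hn] using (decompose ℳ x n).2

end DegreeFiltration

section GradedModule

variable {k A M : Type*} [CommRing k] [Ring A] [Algebra k A] (𝒜 : ℤ → Submodule k A)
  [AddCommGroup M] [Module k M] [Module A M]
  (ℳ : ℤ → Submodule k M) [SetLike.GradedSMul 𝒜 ℳ] [Decomposition ℳ]

theorem decompose_smul_of_mem_left {a : A} {i : ℤ} (ha : a ∈ 𝒜 i) (x : M) (n : ℤ) :
    (decompose ℳ (a • x) n : M) = a • (decompose ℳ x (n - i) : M) := by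
  classical
  induction x using DirectSum.Decomposition.inductionOn ℳ with
  | zero => simp
  | @homogeneous j y =>
    have hay : a • (y : M) ∈ ℳ (i + j) := SetLike.GradedSMul.smul_mem ha y.2
    by_cases h : n = i + j
    · rw [h, decompose_of_mem_same ℳ hay, add_sub_cancel_left, decompose_coe, of_eq_same]
    · rw [decompose_of_mem_ne ℳ hay (Ne.symm h), decompose_coe, of_eq_of_ne _ _ _ (by omega),
        ZeroMemClass.coe_zero, smul_zero]
  | add x y hx hy => simp [smul_add, decompose_add, hx, hy]

variable [GradedAlgebra 𝒜]

theorem decompose_smul_of_mem_right {x : M} {j : ℤ} (hx : x ∈ ℳ j) (a : A) (n : ℤ) :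
    (decompose ℳ (a • x) n : M) = (decompose 𝒜 a (n - j) : A) • x := by
  classical
  induction a using DirectSum.Decomposition.inductionOn 𝒜 with
  | zero => simp
  | @homogeneous i a =>
    rw [decompose_smul_of_mem_left 𝒜 ℳ a.2, decompose_coe]
    by_cases h : n - j = i
    · rw [h, of_eq_same, show n - i = j by omega, decompose_of_mem_same ℳ hx]
    · rw [of_eq_of_ne _ _ _ h, decompose_of_mem_ne ℳ hx (by omega)]
      simp
  | add a b ha hb => simp [add_smul, decompose_add, ha, hb]

theorem decompose_smul_eq_zero {a : A} {x : M} {n : ℤ}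
    (h : ∀ q, (decompose 𝒜 a (n - q) : A) = 0 ∨ (decompose ℳ x q : M) = 0) :
    (decompose ℳ (a • x) n : M) = 0 := by
  classical
  rw [← sum_support_decompose ℳ x, Finset.smul_sum, decompose_sum, DFinsupp.finsetSum_apply,
    Submodule.coe_sum]
  refine Finset.sum_eq_zero fun q _ => ?_
  rw [decompose_smul_of_mem_right 𝒜 ℳ (SetLike.coe_mem _)]
  rcases h q with h | h <;> simp [h]

variable (hpos : ∀ i : ℤ, i < 0 → 𝒜 i = ⊥)
include hpos

theorem decompose_eq_zero_of_neg (a : A) {n : ℤ} (hn : n < 0) : (decompose 𝒜 a n : A) = 0 := by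
  simpa [hpos n hn] using (decompose 𝒜 a n).2

theorem decompose_eq_zero_of_mem_degreeGE {d : ℤ} {x : M} (hx : x ∈ degreeGE A ℳ d) {n : ℤ}
    (hn : n < d) : (decompose ℳ x n : M) = 0 := by
  induction hx using Submodule.span_induction generalizing n with
  | mem y hy =>
    obtain ⟨i, hi, hy⟩ := Set.mem_iUnion₂.mp hy
    exact decompose_of_mem_ne ℳ hy (by omega)
  | zero => simp
  | add x y _ _ hx hy => simp [decompose_add, hx hn, hy hn]
  | smul a x _ hx =>
    refine decompose_smul_eq_zero 𝒜 ℳ fun q => ?_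
    rcases lt_or_ge q d with hq | hq
    · exact .inr (hx hq)
    · exact .inl (decompose_eq_zero_of_neg 𝒜 hpos a (by omega))

theorem eq_zero_of_mem_of_mem_degreeGE {x : M} {n d : ℤ} (hx : x ∈ ℳ n)
    (hxd : x ∈ degreeGE A ℳ d) (hnd : n < d) : x = 0 := by
  rw [← decompose_of_mem_same ℳ hx]
  exact decompose_eq_zero_of_mem_degreeGE 𝒜 ℳ hpos hxd hnd

theorem degreeGE_eq_top_iff {j : ℤ} (hj : ℳ j ≠ ⊥) (hlow : ∀ i < j, ℳ i = ⊥) {d : ℤ} :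
    degreeGE A ℳ d = ⊤ ↔ d ≤ j := by
  refine ⟨fun h => not_lt.mp fun hjd => ?_,
    fun h => degreeGE_eq_top ℳ fun i hi => hlow i (by omega)⟩
  obtain ⟨y, hy, hy0⟩ := Submodule.exists_mem_ne_zero_of_ne_bot hj
  exact hy0 (eq_zero_of_mem_of_mem_degreeGE 𝒜 ℳ hpos hy (h ▸ Submodule.mem_top) hjd)

theorem degreeGE_smul_le (e d : ℤ) :
    degreeGE A 𝒜 e • degreeGE A ℳ d ≤ degreeGE A ℳ (e + d) := by
  refine Submodule.smul_le.mpr fun a ha x hx => mem_degreeGE_of_decompose_eq_zero ℳ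
    fun n hn => decompose_smul_eq_zero 𝒜 ℳ fun q => ?_
  rcases lt_or_ge q d with hq | hq
  · exact .inr (decompose_eq_zero_of_mem_degreeGE 𝒜 ℳ hpos hx hq)
  · exact .inl (decompose_eq_zero_of_mem_degreeGE 𝒜 𝒜 hpos ha (by omega))

end GradedModule

section FiniteGrading

variable {k M : Type*} [Field k] [AddCommGroup M] [Module k M] (ℳ : ℤ → Submodule k M)
  [Decomposition ℳ]

theorem exists_ne_bot [Nontrivial M] : ∃ i, ℳ i ≠ ⊥ := by
  by_contra! h
  obtain ⟨x, hx⟩ := exists_ne (0 : M)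
  refine hx (DirectSum.Decomposition.inductionOn ℳ (motive := fun y : M => y = 0) rfl ?_ ?_ x)
  · exact fun {i} m => by simpa [h i] using m.2
  · exact fun _ _ hm hm' => by rw [hm, hm', add_zero]

variable [FiniteDimensional k M]

theorem finite_setOf_ne_bot : {i | ℳ i ≠ ⊥}.Finite := by
  have := (Decomposition.isInternal ℳ).submodule_iSupIndep.fintypeNeBotOfFiniteDimensional
  exact Set.finite_coe_iff.mp (Finite.of_fintype {i // ℳ i ≠ ⊥})

variable [Nontrivial M]

theorem exists_lowest_degree : ∃ j, ℳ j ≠ ⊥ ∧ ∀ i < j, ℳ i = ⊥ := by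
  obtain ⟨j, hj, hmin⟩ := Set.exists_min_image _ id (finite_setOf_ne_bot ℳ) (exists_ne_bot ℳ)
  exact ⟨j, hj, fun i hi => not_not.mp fun h => (hmin i h).not_gt hi⟩

theorem exists_highest_degree : ∃ r, ℳ r ≠ ⊥ ∧ ∀ i > r, ℳ i = ⊥ := by
  obtain ⟨r, hr, hmax⟩ := Set.exists_max_image _ id (finite_setOf_ne_bot ℳ) (exists_ne_bot ℳ)
  exact ⟨r, hr, fun i hi => not_not.mp fun h => (hmax i h).not_gt hi⟩

end FiniteGrading

section PositivelyGradedAlgebra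

variable {k A : Type*} [Field k] [Ring A] [Algebra k A] (𝒜 : ℤ → Submodule k A)
  {Q : Type*} [AddCommGroup Q] [Module A Q]

theorem smul_eq_zero_of_mem_degreeGE_one {x : Q} (hx : ∀ i, 0 < i → ∀ a ∈ 𝒜 i, a • x = 0)
    {a : A} (ha : a ∈ degreeGE A 𝒜 1) : a • x = 0 := by
  induction ha using Submodule.span_induction with
  | mem a ha =>
    obtain ⟨i, hi, ha⟩ := Set.mem_iUnion₂.mp ha
    exact hx i hi a ha
  | zero => exact zero_smul A x
  | add a b _ _ ha hb => rw [add_smul, ha, hb, add_zero]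
  | smul b a _ ha => rw [smul_eq_mul, mul_smul, ha, smul_zero]

variable [GradedAlgebra 𝒜]

theorem degree_succ_le_mul_degree_one (hgen : ∀ i : ℤ, 0 ≤ i → 𝒜 (i + 1) = 𝒜 1 * 𝒜 i) {n : ℤ}
    (hn : 0 ≤ n) : 𝒜 (n + 1) ≤ 𝒜 n * 𝒜 1 := by
  induction n, hn using Int.leInduction with
  | base => exact fun a ha => one_mul a ▸ Submodule.mul_mem_mul SetLike.GradedOne.one_mem ha
  | succ n hn ih => calc
    𝒜 (n + 1 + 1) = 𝒜 1 * 𝒜 (n + 1) := hgen (n + 1) (by omega)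
    _ ≤ 𝒜 1 * (𝒜 n * 𝒜 1) := by gcongr
    _ = 𝒜 (n + 1) * 𝒜 1 := by rw [← mul_assoc, hgen n hn]

variable (hpos : ∀ i : ℤ, i < 0 → 𝒜 i = ⊥)
include hpos

theorem mul_mem_degreeGE {e : ℤ} {a : A} (ha : a ∈ degreeGE A 𝒜 e) (b : A) :
    a * b ∈ degreeGE A 𝒜 e := by
  have hb : b ∈ degreeGE A 𝒜 0 := degreeGE_eq_top (A := A) 𝒜 hpos ▸ Submodule.mem_top
  simpa using degreeGE_smul_le 𝒜 𝒜 hpos e 0 (Submodule.smul_mem_smul ha hb)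

theorem posPartKills_of_isSimpleModule [FiniteDimensional k A] (S : Type*) [AddCommGroup S]
    [Module A S] [IsSimpleModule A S] : PosPartKills 𝒜 S := by
  let T : ℤ → Submodule A S := fun n => degreeGE A 𝒜 n • ⊤
  suffices T 1 = ⊥ from fun i hi a ha x => (Submodule.eq_bot_iff _).mp this _
    (Submodule.smul_mem_smul (mem_degreeGE_of_mem 𝒜 hi ha) trivial)
  by_contra hne
  have h1 : T 1 = ⊤ := (eq_bot_or_eq_top _).resolve_left hne
  -- `J` would be idempotent on `S`, while `J^n ⊆ A_{≥n}` vanishes for large `n`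
  have hstep (n : ℤ) (hn : T n = ⊤) : T (n + 1) = ⊤ := top_le_iff.mp <| calc
    ⊤ = degreeGE A 𝒜 1 • T n := by rw [hn]; exact h1.symm
    _ = (degreeGE A 𝒜 1 * degreeGE A 𝒜 n) • ⊤ := (Submodule.mul_smul _ _ _).symm
    _ ≤ T (n + 1) := by
      rw [add_comm n]; exact Submodule.smul_mono_left (degreeGE_smul_le 𝒜 𝒜 hpos 1 n)
  obtain ⟨D, hD⟩ := (finite_setOf_ne_bot 𝒜).bddAbove
  have htop : T (max D 0 + 1) = ⊤ :=
    Int.leInduction (motive := fun n _ => T n = ⊤) h1 (fun n _ => hstep n) _ (by omega)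
  have hvanish : ∀ i ≥ max D 0 + 1, 𝒜 i = ⊥ := fun i hi => not_not.mp fun h => by
    have : i ≤ D := hD h
    have := le_max_left D 0
    omega
  have hbot : T (max D 0 + 1) = ⊥ := by
    simp only [T, degreeGE_eq_bot 𝒜 hvanish, Submodule.bot_smul]
  exact bot_ne_top (hbot.symm.trans htop)

theorem smul_eq_decompose_zero_smul (hQ : PosPartKills 𝒜 Q) (a : A) (x : Q) :
    a • x = (decompose 𝒜 a 0 : A) • x := by
  classical
  conv_lhs => rw [← sum_support_decompose 𝒜 a, Finset.sum_smul]
  refine Finset.sum_eq_single 0 (fun p _ hp => ?_) fun h0 => ?_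
  · rcases hp.lt_or_gt with hp | hp
    · rw [decompose_eq_zero_of_neg 𝒜 hpos a hp, zero_smul]
    · exact hQ p hp _ (SetLike.coe_mem _) x
  · rw [DFinsupp.notMem_support_iff.mp h0, ZeroMemClass.coe_zero, zero_smul]

theorem isSemisimpleModule_of_posPartKills (hss : IsSemisimpleRing (𝒜 0))
    (hQ : PosPartKills 𝒜 Q) : IsSemisimpleModule A Q := by
  let _ : Module (𝒜 0) Q := Module.compHom Q (SetLike.GradeZero.subring 𝒜).subtype
  -- `A` acts through `A_0`, so both rings have the same submodules
  let e : Submodule A Q ≃o Submodule (𝒜 0) Q :=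
    { toFun := fun P => { P.toAddSubmonoid with smul_mem' := fun c _ hx => P.smul_mem (c : A) hx }
      invFun := fun P => { P.toAddSubmonoid with
        smul_mem' := fun a x hx => by
          rw [smul_eq_decompose_zero_smul 𝒜 hpos hQ]
          exact P.smul_mem (decompose 𝒜 a 0) hx }
      left_inv := fun _ => rfl
      right_inv := fun _ => rfl
      map_rel_iff' := Iff.rfl }
  rw [isSemisimpleModule_iff, e.complementedLattice_iff, ← isSemisimpleModule_iff]
  infer_instance

variable [FiniteDimensional k A] (hss : IsSemisimpleRing (𝒜 0))
include hss

theorem radM_eq_degreeGE_one_smul_top (Q : Type*) [AddCommGroup Q] [Module A Q] :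
    radM A Q = degreeGE A 𝒜 1 • (⊤ : Submodule A Q) := by
  refine le_antisymm (Module.jacobson_le_of_eq_bot ?_) (Submodule.smul_le.mpr fun a ha x _ => ?_)
  · have : IsSemisimpleModule A (Q ⧸ degreeGE A 𝒜 1 • (⊤ : Submodule A Q)) := by
      refine isSemisimpleModule_of_posPartKills 𝒜 hpos hss fun i hi a ha x => ?_
      induction x using Submodule.Quotient.induction_on with | _ x
      rw [← Submodule.Quotient.mk_smul, Submodule.Quotient.mk_eq_zero]
      exact Submodule.smul_mem_smul (mem_degreeGE_of_mem 𝒜 hi ha) trivial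
    exact IsSemisimpleModule.jacobson_eq_bot A _
  · refine Submodule.mem_sInf.mpr fun C hC => ?_
    have := isSimpleModule_iff_isCoatom.mpr hC
    have h := smul_eq_zero_of_mem_degreeGE_one 𝒜 (x := C.mkQ x)
      (fun i hi b hb => posPartKills_of_isSimpleModule 𝒜 hpos _ i hi b hb _) ha
    rwa [← map_smul, Submodule.mkQ_apply, Submodule.Quotient.mk_eq_zero] at h

theorem radOf_eq_degreeGE_one_smul {M : Type*} [AddCommGroup M] [Module A M] (N : Submodule A M) :
    radOf N = degreeGE A 𝒜 1 • N := by
  rw [radOf, radM_eq_degreeGE_one_smul_top 𝒜 hpos hss, Submodule.map_smul'', Submodule.map_top,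
    Submodule.range_subtype]

theorem mem_socM_iff {x : Q} : x ∈ socM A Q ↔ ∀ i, 0 < i → ∀ a ∈ 𝒜 i, a • x = 0 := by
  let W : Submodule A Q :=
    { carrier := {x | ∀ a ∈ degreeGE A 𝒜 1, a • x = 0}
      add_mem' := fun hx hy a ha => by rw [smul_add, hx a ha, hy a ha, add_zero]
      zero_mem' := fun a _ => smul_zero a
      smul_mem' := fun b x hx a ha => by rw [smul_smul, hx _ (mul_mem_degreeGE 𝒜 hpos ha b)] }
  have hW {x : Q} : x ∈ W ↔ ∀ i, 0 < i → ∀ a ∈ 𝒜 i, a • x = 0 :=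
    ⟨fun hx i hi a ha => hx a (mem_degreeGE_of_mem 𝒜 hi ha),
      fun hx _ ha => smul_eq_zero_of_mem_degreeGE_one 𝒜 hx ha⟩
  suffices socM A Q = W by rw [this, hW]
  refine le_antisymm (sSup_le fun P (_ : IsSimpleModule A P) x hx => hW.mpr ?_) ?_
  · exact fun i hi a ha => congrArg Subtype.val
      (posPartKills_of_isSimpleModule 𝒜 hpos P i hi a ha ⟨x, hx⟩)
  · have : IsSemisimpleModule A W := isSemisimpleModule_of_posPartKills 𝒜 hpos hss
      fun i hi a ha x => Subtype.ext (hW.mp x.2 i hi a ha)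
    exact le_socM_of_isSemisimpleModule W

theorem mem_socStep_iff {M : Type*} [AddCommGroup M] [Module A M] {N : Submodule A M} {x : M} :
    x ∈ socStep N ↔ ∀ i, 0 < i → ∀ a ∈ 𝒜 i, a • x ∈ N := by
  simp only [socStep, Submodule.mem_comap, mem_socM_iff 𝒜 hpos hss, Submodule.mkQ_apply,
    ← Submodule.Quotient.mk_smul, Submodule.Quotient.mk_eq_zero]

theorem mem_socM_of_degree_one_smul_eq_zero (hgen : ∀ i : ℤ, 0 ≤ i → 𝒜 (i + 1) = 𝒜 1 * 𝒜 i)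
    {x : Q} (hx : ∀ a ∈ 𝒜 1, a • x = 0) : x ∈ socM A Q := by
  refine (mem_socM_iff 𝒜 hpos hss).mpr fun i hi a ha => ?_
  rw [← sub_add_cancel i 1] at ha
  refine Submodule.mul_induction_on (degree_succ_le_mul_degree_one 𝒜 hgen (by omega) ha)
    (fun b _ c hc => ?_) fun b c hb hc => by rw [add_smul, hb, hc, add_zero]
  rw [mul_smul, hx c hc, smul_zero]

end PositivelyGradedAlgebra

section LoewySeriesOfGradedModule

variable {k A M : Type*} [Field k] [Ring A] [Algebra k A] (𝒜 : ℤ → Submodule k A) [GradedAlgebra 𝒜]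
  [AddCommGroup M] [Module k M] [Module A M]
  (ℳ : ℤ → Submodule k M) [SetLike.GradedSMul 𝒜 ℳ] [Decomposition ℳ]
  (hpos : ∀ i : ℤ, i < 0 → 𝒜 i = ⊥) (hgen : ∀ i : ℤ, 0 ≤ i → 𝒜 (i + 1) = 𝒜 1 * 𝒜 i)

include hgen in
theorem degreeGE_succ_le_smul {j d : ℤ} (htop : Submodule.span A (ℳ j : Set M) = ⊤)
    (hjd : j ≤ d) : degreeGE A ℳ (d + 1) ≤ degreeGE A 𝒜 1 • degreeGE A ℳ d := by
  refine Submodule.span_le.mpr fun y hy => ?_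
  obtain ⟨t, ht, hy⟩ := Set.mem_iUnion₂.mp hy
  have hgen_mem : ∀ c ∈ 𝒜 (t - j), ∀ m ∈ ℳ j, c • m ∈ degreeGE A 𝒜 1 • degreeGE A ℳ d := by
    intro c hc m hm
    rw [show t - j = t - j - 1 + 1 by ring, hgen _ (by omega)] at hc
    refine Submodule.mul_induction_on hc (fun a ha b hb => ?_)
      fun c c' hc hc' => by rw [add_smul]; exact add_mem hc hc'
    rw [mul_smul]
    exact Submodule.smul_mem_smul (mem_degreeGE_of_mem 𝒜 le_rfl ha)
      (mem_degreeGE_of_mem ℳ (by rw [vadd_eq_add]; omega) (SetLike.GradedSMul.smul_mem hb hm))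
  obtain ⟨n, f, g, rfl⟩ := Submodule.mem_span_set'.mp (htop ▸ Submodule.mem_top : y ∈ _)
  rw [← decompose_of_mem_same ℳ hy, decompose_sum, DFinsupp.finsetSum_apply, Submodule.coe_sum]
  refine Submodule.sum_mem _ fun i _ => ?_
  rw [decompose_smul_of_mem_right 𝒜 ℳ (g i).2]
  exact hgen_mem _ (SetLike.coe_mem _) _ (g i).2

variable [FiniteDimensional k A] (hss : IsSemisimpleRing (𝒜 0))
include hpos hss

theorem span_lowest_degree_eq_top [IsNoetherian A M] (hhd : IsSimpleModule A (M ⧸ radM A M))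
    {j : ℤ} (hj : ℳ j ≠ ⊥) (hlow : ∀ i < j, ℳ i = ⊥) : Submodule.span A (ℳ j : Set M) = ⊤ := by
  have hrad : radM A M ≤ degreeGE A ℳ (j + 1) := by
    rw [radM_eq_degreeGE_one_smul_top 𝒜 hpos hss, ← degreeGE_eq_top (A := A) ℳ hlow, add_comm]
    exact degreeGE_smul_le 𝒜 ℳ hpos 1 j
  by_contra hne
  obtain ⟨C, hC, hle⟩ :=
    (eq_top_or_exists_le_coatom (Submodule.span A (ℳ j : Set M))).resolve_left hne
  have hCrad : C = radM A M :=
    ((isSimpleModule_iff_isCoatom.mp hhd).le_iff.mp (sInf_le hC)).resolve_left hC.1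
  obtain ⟨y, hy, hy0⟩ := Submodule.exists_mem_ne_zero_of_ne_bot hj
  exact hy0 (eq_zero_of_mem_of_mem_degreeGE 𝒜 ℳ hpos hy
    (hrad (hCrad ▸ hle (Submodule.subset_span hy))) (lt_add_one j))

include hgen in
theorem radSeries_eq_degreeGE {j : ℤ} (htop : Submodule.span A (ℳ j : Set M) = ⊤)
    (hlow : ∀ i < j, ℳ i = ⊥) (n : ℕ) : radSeries A M n = degreeGE A ℳ (j + n) := by
  induction n with
  | zero => rw [Nat.cast_zero, add_zero]; exact (degreeGE_eq_top ℳ hlow).symm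
  | succ n ih =>
    show radOf (radSeries A M n) = _
    rw [ih, radOf_eq_degreeGE_one_smul 𝒜 hpos hss, Nat.cast_succ, ← add_assoc]
    refine le_antisymm ?_ (degreeGE_succ_le_smul 𝒜 ℳ hgen htop (by omega))
    rw [add_comm _ 1]
    exact degreeGE_smul_le 𝒜 ℳ hpos 1 _

omit [Decomposition ℳ] in
theorem socM_le_degreeGE (hsoc : IsSimpleModule A (socM A M)) {r : ℤ} (hr : ℳ r ≠ ⊥)
    (hhigh : ∀ i > r, ℳ i = ⊥) : socM A M ≤ degreeGE A ℳ r := by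
  obtain ⟨y, hy, hy0⟩ := Submodule.exists_mem_ne_zero_of_ne_bot hr
  have hysoc : y ∈ socM A M := (mem_socM_iff 𝒜 hpos hss).mpr fun i hi a ha => by
    have := SetLike.GradedSMul.smul_mem ha hy
    rwa [vadd_eq_add, hhigh _ (by omega), Submodule.mem_bot] at this
  have hne : socM A M ⊓ degreeGE A ℳ r ≠ ⊥ := fun h =>
    hy0 ((Submodule.eq_bot_iff _).mp h y ⟨hysoc, mem_degreeGE_of_mem ℳ le_rfl hy⟩)
  exact inf_eq_left.mp
    (((isSimpleModule_iff_isAtom.mp hsoc).le_iff.mp inf_le_left).resolve_left hne)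

include hgen in
theorem socStep_degreeGE (hsoc : IsSimpleModule A (socM A M)) {r : ℤ} (hr : ℳ r ≠ ⊥)
    (hhigh : ∀ i > r, ℳ i = ⊥) {d : ℤ} (hd : d ≤ r) :
    socStep (degreeGE A ℳ (d + 1)) = degreeGE A ℳ d := by
  refine le_antisymm (fun x hx => mem_degreeGE_of_decompose_eq_zero ℳ fun t ht => ?_)
    fun x hx => (mem_socStep_iff 𝒜 hpos hss).mpr fun i hi a ha => ?_
  · have hkill : ∀ a ∈ 𝒜 1, a • (decompose ℳ x t : M) = 0 := fun a ha => by
      rw [← add_sub_cancel_right t 1, ← decompose_smul_of_mem_left 𝒜 ℳ ha]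
      exact decompose_eq_zero_of_mem_degreeGE 𝒜 ℳ hpos
        ((mem_socStep_iff 𝒜 hpos hss).mp hx 1 one_pos a ha) (by omega)
    exact eq_zero_of_mem_of_mem_degreeGE 𝒜 ℳ hpos (SetLike.coe_mem _)
      (socM_le_degreeGE 𝒜 ℳ hpos hss hsoc hr hhigh
        (mem_socM_of_degree_one_smul_eq_zero 𝒜 hpos hss hgen hkill)) (by omega)
  · rw [add_comm]
    exact degreeGE_smul_le 𝒜 ℳ hpos 1 d (Submodule.smul_mem_smul (mem_degreeGE_of_mem 𝒜 hi ha) hx)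

include hgen in
theorem socSeries_eq_degreeGE (hsoc : IsSimpleModule A (socM A M)) {r : ℤ} (hr : ℳ r ≠ ⊥)
    (hhigh : ∀ i > r, ℳ i = ⊥) (n : ℕ) : socSeries A M n = degreeGE A ℳ (r + 1 - n) := by
  induction n with
  | zero =>
    rw [Nat.cast_zero, sub_zero]
    exact (degreeGE_eq_bot ℳ fun i hi => hhigh i (by omega)).symm
  | succ n ih =>
    show socStep (socSeries A M n) = _
    rw [ih, show r + 1 - (n : ℤ) = r - n + 1 by ring,
      socStep_degreeGE 𝒜 ℳ hpos hgen hss hsoc hr hhigh (by omega)]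
    congr 1
    push_cast
    ring

end LoewySeriesOfGradedModule

/-- let `A` be a finite-dimensional positively graded algebra over a field
with `A_0` semisimple and `A` generated by `A_1` over `A_0`.  If a finite-dimensional
graded `A`-module `M` has simple head and simple socle, then `M` is rigid:
`soc^i M = rad^{ℓℓ(M)−i} M` for all `0 ≤ i ≤ ℓℓ(M)`. -/
theorem statement12 {k A M : Type*} [Field k] [Ring A] [Algebra k A]
    (𝒜 : ℤ → Submodule k A) [GradedAlgebra 𝒜]
    [AddCommGroup M] [Module k M] [Module A M] [IsScalarTower k A M]
    (ℳ : ℤ → Submodule k M) [SetLike.GradedSMul 𝒜 ℳ] [DirectSum.Decomposition ℳ]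
    [FiniteDimensional k A] [FiniteDimensional k M]
    (hpos : ∀ i : ℤ, i < 0 → 𝒜 i = ⊥)
    (hss : IsSemisimpleRing ↥(𝒜 0))
    (hgen : ∀ i : ℤ, 0 ≤ i → 𝒜 (i + 1) = 𝒜 1 * 𝒜 i)
    (hhd : IsSimpleModule A (M ⧸ radM A M))
    (hsoc : IsSimpleModule A ↥(socM A M)) :
    ∀ i ≤ loewyLength A M,
      socSeries A M i = radSeries A M (loewyLength A M - i) := by
  have : IsNoetherian A M := isNoetherian_of_tower k inferInstance
  obtain ⟨y, -, hy0⟩ :=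
    Submodule.exists_mem_ne_zero_of_ne_bot (isSimpleModule_iff_isAtom.mp hsoc).1
  have : Nontrivial M := nontrivial_of_ne y 0 hy0
  obtain ⟨j, hj, hlow⟩ := exists_lowest_degree ℳ
  obtain ⟨r, hr, hhigh⟩ := exists_highest_degree ℳ
  have hjr : j ≤ r := not_lt.mp fun h => hj (hhigh j h)
  have htop := span_lowest_degree_eq_top 𝒜 ℳ hpos hss hhd hj hlow
  have hsocSeries := socSeries_eq_degreeGE 𝒜 ℳ hpos hgen hss hsoc hr hhigh
  have hL : loewyLength A M = (r + 1 - j).toNat :=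
    loewyLength_eq_of_socSeries_eq_top_iff fun n => by
      rw [hsocSeries, degreeGE_eq_top_iff 𝒜 ℳ hpos hj hlow]
      omega
  intro i hi
  rw [hL] at hi ⊢
  rw [hsocSeries, radSeries_eq_degreeGE 𝒜 ℳ hpos hgen hss htop hlow]
  congr 1
  omega
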